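/- arXiv:1910.05469 — 3 statements merged into one kernel-verified Lean document; each statement's English description precedes it below -/
import Mathlib

section
/- Let K be a field with at least n elements, let d₁,…,dₙ ∈ K be pairwise distinct, and let D = diag(d₁,…,dₙ) in the algebra UTₙ(K) of n×n upper triangular matrices. Then the set {[A, D] : A ∈ UTₙ(K)} of commutators equals J, the set of strictly upper triangular n×n matrices. -/
open Matrix

/-- Upper triangular n×n matrices (as a set). -/
def UTset (n : ℕ) (K : Type*) [Ring K] : Set (Matrix (Fin n) (Fin n) K) :=
  {A | ∀ i j : Fin n, j < i → A i j = 0}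

/-- The k-th power Jᵏ of the strictly upper triangular ideal:
matrices whose (i,j) entry vanishes unless j ≥ i + k. -/
def Jset (n : ℕ) (K : Type*) [Ring K] (k : ℕ) : Set (Matrix (Fin n) (Fin n) K) :=
  {A | ∀ i j : Fin n, (j : ℕ) < (i : ℕ) + k → A i j = 0}

/-- Evaluation of the multilinear polynomial ∑_σ α_σ x_{σ(1)}⋯x_{σ(n)}. -/
def mlEval {K A : Type*} [CommSemiring K] [Ring A] [Algebra K A] {n : ℕ}
    (α : Equiv.Perm (Fin n) → K) (a : Fin n → A) : A :=
  ∑ σ : Equiv.Perm (Fin n), α σ • (List.ofFn fun i => a (σ i)).prod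

/-- Image of a multilinear polynomial on a subset S of an algebra. -/
def mlImage {K A : Type*} [CommSemiring K] [Ring A] [Algebra K A] {n : ℕ}
    (α : Equiv.Perm (Fin n) → K) (S : Set A) : Set A :=
  {x | ∃ a : Fin n → A, (∀ i, a i ∈ S) ∧ x = mlEval α a}

theorem Matrix.mul_diagonal_sub_diagonal_mul_apply {ι R : Type*} [Fintype ι] [DecidableEq ι]
    [CommRing R] (A : Matrix ι ι R) (d : ι → R) (i j : ι) :
    (A * diagonal d - diagonal d * A) i j = A i j * (d j - d i) := by
  simp only [sub_apply, mul_diagonal, diagonal_mul]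
  ring

/-- On the diagonal the entries of `of fun i j => B i j / (d j - d i)` are divisions by `0`,
hence `0`, so no case split is needed in the definition. -/
theorem Matrix.commutator_diagonal_of_div_sub_eq_self {ι K : Type*} [Fintype ι] [DecidableEq ι]
    [Field K] {d : ι → K} (hd : Function.Injective d) {B : Matrix ι ι K} (hB : ∀ i, B i i = 0) :
    of (fun i j => B i j / (d j - d i)) * diagonal d -
      diagonal d * of (fun i j => B i j / (d j - d i)) = B := by
  ext i j
  rw [mul_diagonal_sub_diagonal_mul_apply, of_apply]
  rcases eq_or_ne i j with rfl | hij
  · rw [hB, zero_div, zero_mul]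
  · exact div_mul_cancel₀ _ (sub_ne_zero.mpr (hd.ne hij.symm))

theorem stmt_0 {K : Type*} [Field K] {n : ℕ} (d : Fin n → K)
    (hd : Function.Injective d) :
    {x | ∃ A ∈ UTset n K, x = A * Matrix.diagonal d - Matrix.diagonal d * A} =
      Jset n K 1 := by
  ext B
  constructor
  · rintro ⟨A, hA, rfl⟩ i j hij
    rw [mul_diagonal_sub_diagonal_mul_apply]
    rcases (Nat.lt_succ_iff.mp hij).lt_or_eq with hji | hji
    · rw [hA i j hji, zero_mul]
    · rw [Fin.ext hji, sub_self, mul_zero]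
  · intro hB
    refine ⟨of fun i j => B i j / (d j - d i), fun i j hji => ?_,
      (commutator_diagonal_of_div_sub_eq_self hd fun i => hB i i (Nat.lt_succ_self _)).symm⟩
    rw [of_apply, hB i j (Nat.lt_succ_of_lt hji), zero_div]
end

section
/- Let K be a field. The image of any multilinear polynomial f(x₁,…,xₙ) = Σ_{σ ∈ Sₙ} α_σ x_{σ(1)}⋯x_{σ(n)} on the algebra UT₂(K) of 2×2 upper triangular matrices is exactly one of: {0}, the set J of strictly upper triangular 2×2 matrices, or all of UT₂(K). -/
open Matrix

/-!
Taking the `i`-th diagonal entry is an algebra homomorphism from upper triangular matrices to `K`,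
so the diagonal of `f(A₁, …, Aₙ)` is `(∑ σ, α σ)` times the product of the diagonals. If
`∑ σ, α σ ≠ 0`, substituting `x₁ = (∑ σ, α σ)⁻¹ • B` and `xᵢ = 1` for `i ≠ 1` yields any `B`.
Otherwise the image lies in the line `J`, and it is closed under scalars since `f` is linear
in `x₁`; hence it is `{0}` or `J`.
-/

section MultilinearPolynomial

variable {K A B : Type*} [CommRing K] [Ring A] [Algebra K A] [Ring B] [Algebra K B] {n : ℕ}
  (α : Equiv.Perm (Fin n) → K)

def mlMultilinearMap : MultilinearMap K (fun _ : Fin n => A) A :=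
  ∑ σ, α σ • (MultilinearMap.mkPiAlgebraFin K n A).domDomCongr σ

lemma mlMultilinearMap_apply (a : Fin n → A) : mlMultilinearMap α a = mlEval α a := by
  simp [mlMultilinearMap, mlEval]

lemma mlEval_update_smul (a : Fin n → A) (i : Fin n) (t : K) :
    mlEval α (Function.update a i (t • a i)) = t • mlEval α a := by
  rw [← mlMultilinearMap_apply, ← mlMultilinearMap_apply, MultilinearMap.map_update_smul,
    Function.update_eq_self]

lemma AlgHom.map_mlEval (φ : A →ₐ[K] B) (a : Fin n → A) :
    φ (mlEval α a) = mlEval α (fun i => φ (a i)) := by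
  simp [mlEval, map_list_prod, List.map_ofFn, Function.comp_def]

lemma mlEval_of_comm {C : Type*} [CommRing C] [Algebra K C] (a : Fin n → C) :
    mlEval α a = (∑ σ, α σ) • ∏ i, a i := by
  simp only [mlEval, List.prod_ofFn, Equiv.prod_comp, Finset.sum_smul]

-- `x` lies in the commutative subalgebra `aeval x (K[X])`, where `mlEval` is `(∑ σ, α σ) • ∏`.
lemma mlEval_mulSingle (i : Fin n) (x : A) :
    mlEval α (Pi.mulSingle i x) = (∑ σ, α σ) • x := by
  have h := (Polynomial.aeval (R := K) x).map_mlEval α (Pi.mulSingle i Polynomial.X)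
  rwa [← Pi.mulSingle_op (fun _ => Polynomial.aeval x) (fun _ => map_one _), Polynomial.aeval_X,
    mlEval_of_comm, Fintype.prod_pi_mulSingle', map_smul, Polynomial.aeval_X, eq_comm] at h

lemma mlEval_mem (S : Subalgebra K A) {a : Fin n → A} (ha : ∀ i, a i ∈ S) :
    mlEval α a ∈ S :=
  Subalgebra.sum_mem _ fun σ _ => Subalgebra.smul_mem _
    (Subalgebra.list_prod_mem _ fun _ hx => by
      obtain ⟨k, rfl⟩ := List.mem_ofFn.mp hx
      exact ha _) _

lemma mlImage_subset (S : Subalgebra K A) : mlImage α (S : Set A) ⊆ S := by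
  rintro _ ⟨a, ha, rfl⟩
  exact mlEval_mem α S ha

lemma smul_mem_mlImage (hn : 0 < n) (S : Subalgebra K A) {x : A} (hx : x ∈ mlImage α (S : Set A))
    (t : K) : t • x ∈ mlImage α (S : Set A) := by
  obtain ⟨a, ha, rfl⟩ := hx
  refine ⟨Function.update a ⟨0, hn⟩ (t • a ⟨0, hn⟩), fun i => ?_, (mlEval_update_smul ..).symm⟩
  rcases eq_or_ne i ⟨0, hn⟩ with rfl | hi
  · simpa using S.smul_mem (ha _) t
  · simpa [hi] using ha i

lemma zero_mem_mlImage (hn : 0 < n) (S : Subalgebra K A) : (0 : A) ∈ mlImage α (S : Set A) := by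
  simpa using smul_mem_mlImage α hn S ⟨1, fun _ => S.one_mem, rfl⟩ 0

end MultilinearPolynomial

lemma mlImage_eq_of_sum_ne_zero {K A : Type*} [Field K] [Ring A] [Algebra K A] {n : ℕ} (hn : 0 < n)
    {α : Equiv.Perm (Fin n) → K} (hα : ∑ σ, α σ ≠ 0) (S : Subalgebra K A) :
    mlImage α (S : Set A) = S := by
  refine (mlImage_subset α S).antisymm fun x hx => ⟨Pi.mulSingle ⟨0, hn⟩ ((∑ σ, α σ)⁻¹ • x),
    fun i => ?_, ?_⟩
  · rcases eq_or_ne i ⟨0, hn⟩ with rfl | hi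
    · simpa using S.smul_mem hx _
    · simp [hi]
  · rw [mlEval_mulSingle, smul_smul, mul_inv_cancel₀ hα, one_smul]

section UpperTriangular

variable {m : Type*} [Fintype m] [LinearOrder m]

lemma Matrix.IsUpperTriangular.mul_apply_self {R : Type*} [NonUnitalNonAssocSemiring R]
    {M N : Matrix m m R} (hM : M.IsUpperTriangular) (hN : N.IsUpperTriangular) (i : m) :
    (M * N) i i = M i i * N i i := by
  rw [mul_apply]
  refine Finset.sum_eq_single i (fun k _ hk => ?_) (by simp)
  rcases lt_or_gt_of_ne hk with hk | hk
  · rw [hM hk, zero_mul]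
  · rw [hN hk, mul_zero]

variable [DecidableEq m] (K : Type*) [CommRing K]

def upperTriangularDiagHom (i : m) : blockTriangularSubalgebra K K (id : m → m) →ₐ[K] K where
  toFun M := (M : Matrix m m K) i i
  map_one' := one_apply_eq i
  map_mul' M N := Matrix.IsUpperTriangular.mul_apply_self M.2 N.2 i
  map_zero' := rfl
  map_add' _ _ := rfl
  commutes' r := by simp [algebraMap_eq_diagonal]

variable {K}

lemma mlEval_apply_self {n : ℕ} (α : Equiv.Perm (Fin n) → K) {a : Fin n → Matrix m m K}
    (ha : ∀ k, (a k).IsUpperTriangular) (i : m) :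
    mlEval α a i i = (∑ σ, α σ) * ∏ k, a k i i := by
  let a' : Fin n → blockTriangularSubalgebra K K (id : m → m) := fun k => ⟨a k, ha k⟩
  have hval : ((mlEval α a' : blockTriangularSubalgebra K K id) : Matrix m m K) = mlEval α a :=
    (blockTriangularSubalgebra K K id).val.map_mlEval α a'
  calc mlEval α a i i = upperTriangularDiagHom K i (mlEval α a') := by rw [← hval]; rfl
    _ = (∑ σ, α σ) * ∏ k, a k i i := by
        rw [AlgHom.map_mlEval, mlEval_of_comm, smul_eq_mul]; rfl

end UpperTriangular

lemma UTset_eq_blockTriangularSubalgebra (m : ℕ) (K : Type*) [CommRing K] :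
    UTset m K = blockTriangularSubalgebra K K (id : Fin m → Fin m) :=
  rfl

lemma mem_Jset_one_iff {m : ℕ} {K : Type*} [Ring K] {A : Matrix (Fin m) (Fin m) K} :
    A ∈ Jset m K 1 ↔ A ∈ UTset m K ∧ ∀ i, A i i = 0 := by
  refine ⟨fun h => ⟨fun i j hij => h i j (by omega), fun i => h i i (by omega)⟩,
    fun ⟨hUT, hdiag⟩ i j hij => ?_⟩
  rcases (Nat.lt_succ_iff_lt_or_eq.mp hij) with hij | hij
  · exact hUT i j hij
  · rw [Fin.ext hij, hdiag]

lemma mlImage_subset_Jset_of_sum_eq_zero {K : Type*} [CommRing K] {m n : ℕ}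
    {α : Equiv.Perm (Fin n) → K} (hα : ∑ σ, α σ = 0) : mlImage α (UTset m K) ⊆ Jset m K 1 := by
  rintro _ ⟨a, ha, rfl⟩
  rw [UTset_eq_blockTriangularSubalgebra] at ha
  refine mem_Jset_one_iff.mpr ⟨mlEval_mem α _ ha, fun i => ?_⟩
  rw [mlEval_apply_self α ha, hα, zero_mul]

lemma eq_smul_of_mem_Jset_two {K : Type*} [Field K] {A B : Matrix (Fin 2) (Fin 2) K}
    (hA : A ∈ Jset 2 K 1) (hB : B ∈ Jset 2 K 1) (hB0 : B ≠ 0) : A = (A 0 1 / B 0 1) • B := by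
  have hB01 : B 0 1 ≠ 0 := fun h => hB0 <| by
    ext i j; fin_cases i <;> fin_cases j <;> simp [h, hB 0 0, hB 1 0, hB 1 1]
  ext i j
  fin_cases i <;> fin_cases j <;> simp [hA 0 0, hA 1 0, hA 1 1, hB 0 0, hB 1 0, hB 1 1, hB01]

theorem stmt_5 {K : Type*} [Field K] {n : ℕ} (hn : 0 < n)
    (α : Equiv.Perm (Fin n) → K) :
    mlImage α (UTset 2 K) = {0} ∨ mlImage α (UTset 2 K) = Jset 2 K 1 ∨
      mlImage α (UTset 2 K) = UTset 2 K := by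
  have hUT := UTset_eq_blockTriangularSubalgebra 2 K
  by_cases hα : ∑ σ, α σ = 0
  · have hJ := mlImage_subset_Jset_of_sum_eq_zero (m := 2) hα
    by_cases h0 : mlImage α (UTset 2 K) ⊆ {0}
    · exact Or.inl <| h0.antisymm <| by simpa [hUT] using zero_mem_mlImage α hn _
    · obtain ⟨y, hy, hy0⟩ := Set.not_subset.mp h0
      refine Or.inr <| Or.inl <| hJ.antisymm fun x hx => ?_
      rw [eq_smul_of_mem_Jset_two hx (hJ hy) hy0, hUT]
      rw [hUT] at hy
      exact smul_mem_mlImage α hn _ hy _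
  · rw [hUT]
    exact Or.inr <| Or.inr <| mlImage_eq_of_sum_ne_zero hn hα _
end

section
/- Let K be a field with at least 3 elements, let d₁,d₂,d₃ ∈ K be pairwise distinct and D = diag(d₁,d₂,d₃) ∈ UT₃(K). Then for every m ≥ 1, the set of iterated commutators {[A, D, D, …, D] (m copies of D) : A ∈ UT₃(K)} equals J, the strictly upper triangular 3×3 matrices. -/
open Matrix

/-! Since `D` is diagonal, `X ↦ [X, D]` multiplies the `(i, j)` entry by `d j - d i`, so its
`m`-th iterate multiplies it by `(d j - d i) ^ m`. For distinct `d i` this factor vanishes exactly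
on the diagonal, so upper triangular matrices go onto strictly upper triangular ones. -/

theorem iterate_comm_diagonal_apply {ι R : Type*} [Fintype ι] [DecidableEq ι] [CommRing R]
    (d : ι → R) (m : ℕ) (A : Matrix ι ι R) (i j : ι) :
    ((fun X : Matrix ι ι R => X * diagonal d - diagonal d * X)^[m] A) i j
      = A i j * (d j - d i) ^ m := by
  induction m with
  | zero => simp
  | succ m ih =>
    rw [Function.iterate_succ_apply']
    simp only [Matrix.sub_apply, mul_diagonal, diagonal_mul, ih]
    ring

theorem iterate_comm_diagonal_mem_Jset {n : ℕ} {R : Type*} [CommRing R] (d : Fin n → R)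
    {m : ℕ} (hm : 1 ≤ m) {A : Matrix (Fin n) (Fin n) R} (hA : A ∈ UTset n R) :
    (fun X : Matrix (Fin n) (Fin n) R => X * diagonal d - diagonal d * X)^[m] A
      ∈ Jset n R 1 := by
  intro i j hij
  rw [iterate_comm_diagonal_apply]
  rcases (Nat.lt_succ_iff.mp hij).lt_or_eq with hlt | heq
  · rw [hA i j hlt, zero_mul]
  · rw [Fin.ext heq, sub_self, zero_pow (by omega), mul_zero]

theorem exists_UTset_iterate_comm_diagonal_eq {n : ℕ} {K : Type*} [Field K] {d : Fin n → K}
    (hd : Function.Injective d) (m : ℕ) {B : Matrix (Fin n) (Fin n) K}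
    (hB : B ∈ Jset n K 1) :
    ∃ A ∈ UTset n K,
      B = (fun X : Matrix (Fin n) (Fin n) K => X * diagonal d - diagonal d * X)^[m] A := by
  refine ⟨of fun i j => B i j / (d j - d i) ^ m, fun i j hji => ?_, ?_⟩
  · simp [hB i j (by omega)]
  · ext i j
    rw [iterate_comm_diagonal_apply, of_apply]
    by_cases hij : i = j
    · subst hij
      simp [hB i i (by omega)]
    · have hne : d j - d i ≠ 0 := sub_ne_zero.mpr fun h => hij (hd h).symm
      field_simp

theorem image_iterate_comm_diagonal_UTset {n : ℕ} {K : Type*} [Field K] {d : Fin n → K}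
    (hd : Function.Injective d) {m : ℕ} (hm : 1 ≤ m) :
    {x | ∃ A ∈ UTset n K,
        x = (fun X : Matrix (Fin n) (Fin n) K =>
          X * diagonal d - diagonal d * X)^[m] A} = Jset n K 1 := by
  ext B
  constructor
  · rintro ⟨A, hA, rfl⟩
    exact iterate_comm_diagonal_mem_Jset d hm hA
  · exact exists_UTset_iterate_comm_diagonal_eq hd m

theorem stmt_12 {K : Type*} [Field K] (d : Fin 3 → K)
    (hd : Function.Injective d) (m : ℕ) (hm : 1 ≤ m) :
    {x | ∃ A ∈ UTset 3 K,
        x = (fun X : Matrix (Fin 3) (Fin 3) K =>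
          X * Matrix.diagonal d - Matrix.diagonal d * X)^[m] A} =
      Jset 3 K 1 :=
  image_iterate_comm_diagonal_UTset hd hm
end
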